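/- Let N ≥ 2 and let (a^V,e^V) and (a^W,e^W) be A-module structures on I×{0,…,N}-graded spaces V and W, with every e^V_{i,n} invertible. Then the composite ∂₁ ∘ ∂₀ : L(V₀,W₀) → L(V₀,W₂) is zero. -/

import Mathlib

/-!
Expanding `∂₁(∂₀ φ)_k` gives, summed over the arrows `h` with `t(h) = k`, four kinds of terms.
The terms `a^W a^W φ` add up to the relation (R1) for `W`, composed with `φ_k`. The two mixed
terms cancel by (R2) for `W`. In the last one, (R2) for `V` turns `a^V_{h,0} ∘ (e^V)⁻¹` into
`(e^V)⁻¹ ∘ a^V_{h,1}`, so these terms add up to `e^W e^W φ_k (e^V)⁻¹ (e^V)⁻¹` composed with the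
relation (R1) for `V`. Both relations appear with the arrows grouped by target instead of source;
reindexing by `h ↦ h̄` shows that this only changes the sign, since `ε(h̄) = -ε(h)`.
-/

noncomputable section

/-- Cast of graded components of an `I × ℕ`-graded family of `ℂ`-vector spaces along an
equality of vertices. -/
def lcastN {I : Type} (V : I → ℕ → Type)
    [∀ i n, AddCommGroup (V i n)] [∀ i n, Module ℂ (V i n)]
    (n : ℕ) {i j : I} (hij : i = j) : V i n ≃ₗ[ℂ] V j n := by
  subst hij; exact LinearEquiv.refl ℂ (V i n)

section Maps

variable {I H : Type} [DecidableEq I] [Fintype H]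
  (s t : H → I) (bar : H → H)
  (s_bar : ∀ h, s (bar h) = t h) (t_bar : ∀ h, t (bar h) = s h)
  (eps : H → ℤ)
  (V W : I → ℕ → Type)
  [∀ i n, AddCommGroup (V i n)] [∀ i n, Module ℂ (V i n)]
  [∀ i n, AddCommGroup (W i n)] [∀ i n, Module ℂ (W i n)]
  (aV : ∀ (h : H) (n : ℕ), V (s h) n →ₗ[ℂ] V (t h) (n + 1))
  (eV : ∀ (i : I) (n : ℕ), V i n →ₗ[ℂ] V i (n + 1))
  (aW : ∀ (h : H) (n : ℕ), W (s h) n →ₗ[ℂ] W (t h) (n + 1))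
  (eW : ∀ (i : I) (n : ℕ), W i n →ₗ[ℂ] W i (n + 1))
  (eVinv : ∀ (i : I) (n : ℕ), V i (n + 1) →ₗ[ℂ] V i n)

/-- The map `∂₀ : L(V₀,W₀) → E(V₀,W₁)`,
`∂₀(φ)_h = a^W_{h,0}∘φ_{s(h)} − e^W_{t(h),0}∘φ_{t(h)}∘(e^V_{t(h),0})⁻¹∘a^V_{h,0}`. -/
def d0 (φ : ∀ i, V i 0 →ₗ[ℂ] W i 0) : ∀ h, V (s h) 0 →ₗ[ℂ] W (t h) 1 :=
  fun h => aW h 0 ∘ₗ φ (s h) - eW (t h) 0 ∘ₗ φ (t h) ∘ₗ eVinv (t h) 0 ∘ₗ aV h 0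

/-- The map `∂₁ : E(V₀,W₁) → L(V₀,W₂)`,
`∂₁(ψ)_k = Σ_{h : t(h) = k} ε(h)( a^W_{h,1}∘ψ_{h̄} + e^W_{k,1}∘ψ_h∘(e^V_{s(h),0})⁻¹∘a^V_{h̄,0} )`. -/
def d1 (ψ : ∀ h, V (s h) 0 →ₗ[ℂ] W (t h) 1) : ∀ k, V k 0 →ₗ[ℂ] W k 2 :=
  fun k => ∑ h : H, if hk : t h = k then
    (eps h : ℂ) • ((lcastN W 2 hk).toLinearMap ∘ₗ
      (aW h 1 ∘ₗ (lcastN W 1 (t_bar h)).toLinearMap ∘ₗ ψ (bar h)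
        + eW (t h) 1 ∘ₗ ψ h ∘ₗ eVinv (s h) 0 ∘ₗ (lcastN V 1 (t_bar h)).toLinearMap
            ∘ₗ aV (bar h) 0)
      ∘ₗ (lcastN V 0 ((s_bar h).trans hk)).symm.toLinearMap)
  else 0

end Maps

section Cast

variable {I : Type} (X Y : I → ℕ → Type)
  [∀ i n, AddCommGroup (X i n)] [∀ i n, Module ℂ (X i n)]
  [∀ i n, AddCommGroup (Y i n)] [∀ i n, Module ℂ (Y i n)]

theorem lcastN_symm (n : ℕ) {i j : I} (hij : i = j) :
    (lcastN X n hij).symm = lcastN X n hij.symm := by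
  subst hij; rfl

theorem lcastN_lcastN_apply (n : ℕ) {i j k : I} (hij : i = j) (hjk : j = k) (x : X i n) :
    lcastN X n hjk (lcastN X n hij x) = lcastN X n (hij.trans hjk) x := by
  subst hij hjk; rfl

theorem lcastN_map_apply {m m' : ℕ} (f : ∀ i, X i m →ₗ[ℂ] Y i m') {i j : I} (hij : i = j)
    (x : X i m) : lcastN Y m' hij (f i x) = f j (lcastN X m hij x) := by
  subst hij; rfl

theorem map_lcastN_congrArg {H : Type} (s t : H → I)
    (a : ∀ (h : H) (n : ℕ), X (s h) n →ₗ[ℂ] X (t h) (n + 1)) {h g : H} (hg : h = g) (n : ℕ)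
    (x : X (s h) n) :
    a g n (lcastN X n (congrArg s hg) x) = lcastN X (n + 1) (congrArg t hg) (a h n x) := by
  subst hg; rfl

end Cast

theorem LinearMap.comp_inv_eq_inv_comp_of_comp_eq {R M M' N N' : Type*} [Semiring R]
    [AddCommMonoid M] [AddCommMonoid M'] [AddCommMonoid N] [AddCommMonoid N']
    [Module R M] [Module R M'] [Module R N] [Module R N']
    {a : M →ₗ[R] N} {a' : M' →ₗ[R] N'} {e : M →ₗ[R] M'} {e' : N →ₗ[R] N'}
    {einv : M' →ₗ[R] M} {einv' : N' →ₗ[R] N}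
    (h : e' ∘ₗ a = a' ∘ₗ e) (he' : einv' ∘ₗ e' = id) (he : e ∘ₗ einv = id) :
    a ∘ₗ einv = einv' ∘ₗ a' := calc
  a ∘ₗ einv = (einv' ∘ₗ e') ∘ₗ a ∘ₗ einv := by rw [he', id_comp]
  _ = einv' ∘ₗ (e' ∘ₗ a) ∘ₗ einv := by simp only [comp_assoc]
  _ = einv' ∘ₗ a' ∘ₗ e ∘ₗ einv := by rw [h, comp_assoc]
  _ = einv' ∘ₗ a' := by rw [he, comp_id]

section Preprojective

variable {I H : Type} [DecidableEq I] [Fintype H]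
  (s t : H → I) (bar : H → H)
  (s_bar : ∀ h, s (bar h) = t h) (t_bar : ∀ h, t (bar h) = s h) (eps : H → ℤ)
  (X : I → ℕ → Type) [∀ i n, AddCommGroup (X i n)] [∀ i n, Module ℂ (X i n)]
  (a : ∀ (h : H) (n : ℕ), X (s h) n →ₗ[ℂ] X (t h) (n + 1))

/-- The left-hand side of (R1) at the vertex `k`. -/
def preprojRel (n : ℕ) (k : I) : X k n →ₗ[ℂ] X k (n + 2) :=
  ∑ h : H, if hk : s h = k then
    (eps h : ℂ) • ((lcastN X (n + 2) ((t_bar h).trans hk)).toLinearMap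
      ∘ₗ a (bar h) (n + 1) ∘ₗ (lcastN X (n + 1) (s_bar h)).symm.toLinearMap
      ∘ₗ a h n ∘ₗ (lcastN X n hk).symm.toLinearMap) else 0

/-- The sum `Σ_{t(h) = k} ε(h) a_{h,n+1} ∘ a_{h̄,n}`, which occurs in `∂₁ ∘ ∂₀`. -/
def preprojRelByTarget (n : ℕ) (k : I) : X k n →ₗ[ℂ] X k (n + 2) :=
  ∑ h : H, if hk : t h = k then
    (eps h : ℂ) • ((lcastN X (n + 2) hk).toLinearMap ∘ₗ a h (n + 1)
      ∘ₗ (lcastN X (n + 1) (t_bar h)).toLinearMap ∘ₗ a (bar h) n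
      ∘ₗ (lcastN X n ((s_bar h).trans hk)).symm.toLinearMap) else 0

theorem preprojRelByTarget_eq_neg (bar_invol : Function.Involutive bar)
    (eps_bar : ∀ h, eps (bar h) = -eps h) (n : ℕ) (k : I) :
    preprojRelByTarget s t bar s_bar t_bar eps X a n k
      = -preprojRel s t bar s_bar t_bar eps X a n k := by
  rw [preprojRelByTarget, preprojRel, ← Finset.sum_neg_distrib]
  refine Fintype.sum_bijective bar bar_invol.bijective _ _ fun h => ?_
  by_cases hk : t h = k
  · have hk' : s (bar h) = k := (s_bar h).trans hk
    simp only [dif_pos hk, dif_pos hk', eps_bar, Int.cast_neg, neg_smul, neg_neg]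
    congr 1
    ext w
    simp only [LinearMap.comp_apply, LinearEquiv.coe_coe, lcastN_symm]
    rw [← lcastN_lcastN_apply X (n + 1) (s_bar (bar h)).symm (congrArg s (bar_invol h)),
      map_lcastN_congrArg X s t a (bar_invol h), lcastN_lcastN_apply]
  · have hk' : ¬ s (bar h) = k := fun h' => hk ((s_bar h).symm.trans h')
    simp only [dif_neg hk, dif_neg hk', neg_zero]

end Preprojective

section Differential

variable {I H : Type}
  (s t : H → I) (bar : H → H)
  (s_bar : ∀ h, s (bar h) = t h) (t_bar : ∀ h, t (bar h) = s h) (eps : H → ℤ)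
  (V W : I → ℕ → Type)
  [∀ i n, AddCommGroup (V i n)] [∀ i n, Module ℂ (V i n)]
  [∀ i n, AddCommGroup (W i n)] [∀ i n, Module ℂ (W i n)]
  (aV : ∀ (h : H) (n : ℕ), V (s h) n →ₗ[ℂ] V (t h) (n + 1))
  (aW : ∀ (h : H) (n : ℕ), W (s h) n →ₗ[ℂ] W (t h) (n + 1))
  (eW : ∀ (i : I) (n : ℕ), W i n →ₗ[ℂ] W i (n + 1))
  (eVinv : ∀ (i : I) (n : ℕ), V i (n + 1) →ₗ[ℂ] V i n)
  (φ : ∀ i, V i 0 →ₗ[ℂ] W i 0)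

theorem d1_d0_summand_apply {h : H} (hW : eW (t h) 1 ∘ₗ aW h 0 = aW h 1 ∘ₗ eW (s h) 0)
    (hV : aV h 0 ∘ₗ eVinv (s h) 0 = eVinv (t h) 1 ∘ₗ aV h 1) (x : V (s (bar h)) 0) :
    aW h 1 (lcastN W 1 (t_bar h) (d0 s t V W aV aW eW eVinv φ (bar h) x))
      + eW (t h) 1 (d0 s t V W aV aW eW eVinv φ h
          (eVinv (s h) 0 (lcastN V 1 (t_bar h) (aV (bar h) 0 x))))
    = aW h 1 (lcastN W 1 (t_bar h) (aW (bar h) 0 (φ (s (bar h)) x)))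
      - eW (t h) 1 (eW (t h) 0 (φ (t h) (eVinv (t h) 0 (eVinv (t h) 1
          (aV h 1 (lcastN V 1 (t_bar h) (aV (bar h) 0 x))))))) := by
  have hW' := LinearMap.congr_fun hW
  have hV' := LinearMap.congr_fun hV
  simp only [LinearMap.comp_apply] at hW' hV'
  simp only [d0, LinearMap.sub_apply, LinearMap.comp_apply, map_sub,
    lcastN_map_apply W W (fun i => eW i 0), lcastN_map_apply V W φ,
    lcastN_map_apply V V (fun i => eVinv i 0), ← hW', hV']
  abel

theorem d1_d0_eq [DecidableEq I] [Fintype H]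
    (hW : ∀ h, eW (t h) 1 ∘ₗ aW h 0 = aW h 1 ∘ₗ eW (s h) 0)
    (hV : ∀ h, aV h 0 ∘ₗ eVinv (s h) 0 = eVinv (t h) 1 ∘ₗ aV h 1) (k : I) :
    d1 s t bar s_bar t_bar eps V W aV aW eW eVinv (d0 s t V W aV aW eW eVinv φ) k
      = preprojRelByTarget s t bar s_bar t_bar eps W aW 0 k ∘ₗ φ k
        - (eW k 1 ∘ₗ eW k 0 ∘ₗ φ k ∘ₗ eVinv k 0 ∘ₗ eVinv k 1)
          ∘ₗ preprojRelByTarget s t bar s_bar t_bar eps V aV 0 k := by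
  ext v
  simp only [d1, preprojRelByTarget, LinearMap.sub_apply, LinearMap.comp_apply,
    LinearMap.sum_apply, map_sum, ← Finset.sum_sub_distrib]
  refine Finset.sum_congr rfl fun h _ => ?_
  split_ifs with hk
  · simp only [LinearMap.smul_apply, LinearMap.comp_apply, LinearMap.add_apply,
      LinearEquiv.coe_coe, d1_d0_summand_apply s t bar t_bar V W aV aW eW eVinv φ (hW h) (hV h),
      map_sub, smul_sub, map_smul, lcastN_symm, lcastN_map_apply W W (fun i => eW i 1),
      lcastN_map_apply W W (fun i => eW i 0), lcastN_map_apply V W φ,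
      lcastN_map_apply V V (fun i => eVinv i 0), lcastN_map_apply V V (fun i => eVinv i 1)]
  · simp only [LinearMap.zero_apply, map_zero, sub_zero]

end Differential

theorem stmt11
    {I H : Type} [Fintype H] [DecidableEq I]
    (s t : H → I) (bar : H → H)
    (bar_invol : ∀ h, bar (bar h) = h)
    (s_bar : ∀ h, s (bar h) = t h) (t_bar : ∀ h, t (bar h) = s h)
    (eps : H → ℤ)
    (eps_bar : ∀ h, eps (bar h) = - eps h)
    (N : ℕ) (hN : 2 ≤ N)
    (V W : I → ℕ → Type)
    [∀ i n, AddCommGroup (V i n)] [∀ i n, Module ℂ (V i n)]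
    [∀ i n, AddCommGroup (W i n)] [∀ i n, Module ℂ (W i n)]
    (aV : ∀ (h : H) (n : ℕ), V (s h) n →ₗ[ℂ] V (t h) (n + 1))
    (eV : ∀ (i : I) (n : ℕ), V i n →ₗ[ℂ] V i (n + 1))
    (aW : ∀ (h : H) (n : ℕ), W (s h) n →ₗ[ℂ] W (t h) (n + 1))
    (eW : ∀ (i : I) (n : ℕ), W i n →ₗ[ℂ] W i (n + 1))
    -- (R1) for V and W
    (hR1V : ∀ (k : I) (n : ℕ), n + 2 ≤ N →
      (∑ h : H, if hk : s h = k then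
        (eps h : ℂ) • ((lcastN V (n + 2) ((t_bar h).trans hk)).toLinearMap
          ∘ₗ aV (bar h) (n + 1) ∘ₗ (lcastN V (n + 1) (s_bar h)).symm.toLinearMap
          ∘ₗ aV h n ∘ₗ (lcastN V n hk).symm.toLinearMap) else 0) = 0)
    (hR1W : ∀ (k : I) (n : ℕ), n + 2 ≤ N →
      (∑ h : H, if hk : s h = k then
        (eps h : ℂ) • ((lcastN W (n + 2) ((t_bar h).trans hk)).toLinearMap
          ∘ₗ aW (bar h) (n + 1) ∘ₗ (lcastN W (n + 1) (s_bar h)).symm.toLinearMap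
          ∘ₗ aW h n ∘ₗ (lcastN W n hk).symm.toLinearMap) else 0) = 0)
    -- (R2) for V and W
    (hR2V : ∀ (h : H) (n : ℕ), n + 2 ≤ N →
      eV (t h) (n + 1) ∘ₗ aV h n = aV h (n + 1) ∘ₗ eV (s h) n)
    (hR2W : ∀ (h : H) (n : ℕ), n + 2 ≤ N →
      eW (t h) (n + 1) ∘ₗ aW h n = aW h (n + 1) ∘ₗ eW (s h) n)
    -- the e^V are invertible, with inverses eVinv
    (eVinv : ∀ (i : I) (n : ℕ), V i (n + 1) →ₗ[ℂ] V i n)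
    (hinv : ∀ (i : I) (n : ℕ), n + 1 ≤ N →
      eVinv i n ∘ₗ eV i n = LinearMap.id ∧ eV i n ∘ₗ eVinv i n = LinearMap.id) :
    ∀ φ : ∀ i, V i 0 →ₗ[ℂ] W i 0,
      d1 s t bar s_bar t_bar eps V W aV aW eW eVinv
        (d0 s t V W aV aW eW eVinv φ) = 0 := by
  intro φ
  funext k
  have hV : ∀ h, aV h 0 ∘ₗ eVinv (s h) 0 = eVinv (t h) 1 ∘ₗ aV h 1 := fun h =>
    LinearMap.comp_inv_eq_inv_comp_of_comp_eq (hR2V h 0 hN) (hinv (t h) 1 hN).1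
      (hinv (s h) 0 (by omega)).2
  have hR1W₀ : preprojRel s t bar s_bar t_bar eps W aW 0 k = 0 := hR1W k 0 hN
  have hR1V₀ : preprojRel s t bar s_bar t_bar eps V aV 0 k = 0 := hR1V k 0 hN
  rw [d1_d0_eq s t bar s_bar t_bar eps V W aV aW eW eVinv φ (fun h => hR2W h 0 hN) hV,
    preprojRelByTarget_eq_neg _ _ _ _ _ _ _ _ bar_invol eps_bar,
    preprojRelByTarget_eq_neg _ _ _ _ _ _ _ _ bar_invol eps_bar, hR1W₀, hR1V₀]
  simp only [neg_zero, LinearMap.zero_comp, LinearMap.comp_zero, sub_zero, Pi.zero_apply]
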